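/- arXiv:2402.03928 — 3 statements merged into one kernel-verified Lean document; each statement's English description precedes it below -/
import Mathlib

section
/- Let v : 2^I → R be a characteristic function on a set I of n players with v(∅) = 0, and let p ∈ R^n, ε ∈ R, γ ≥ 0. If for every coalition C ⊆ I the loss ℓ_C(p, ε) = (1/(2|C|))·(max(0, v(C) - ε - Σ_{i∈C} p_i))² satisfies ℓ_C(p, ε) ≤ γ², then for every nonempty coalition C, Σ_{i∈C} p_i ≥ v(C) - (ε + √(2n)·γ); i.e., p lies in the (ε + √(2n)γ)-core. -/
/-- If every coalition's squared-hinge loss is at most `γ²`, then the payoff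
vector `p` lies in the `(ε + √(2n)·γ)`-core. -/
theorem approx_core_from_loss_bound (n : ℕ) (v : Finset (Fin n) → ℝ)
    (hv0 : v ∅ = 0) (p : Fin n → ℝ) (ε γ : ℝ) (hγ : 0 ≤ γ)
    (hloss : ∀ C : Finset (Fin n), C.Nonempty →
      (1 / (2 * (C.card : ℝ))) * (max 0 (v C - ε - ∑ i ∈ C, p i)) ^ 2 ≤ γ ^ 2) :
    ∀ C : Finset (Fin n), C.Nonempty →
      v C - (ε + Real.sqrt (2 * n) * γ) ≤ ∑ i ∈ C, p i := by
  intro C hC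
  have hcard : (1 : ℝ) ≤ (C.card : ℝ) := by
    exact_mod_cast Finset.one_le_card.mpr hC
  have hcardn : (C.card : ℝ) ≤ n := by
    simpa using (Nat.cast_le (α := ℝ)).mpr (le_trans (Finset.card_le_card (Finset.subset_univ C)) (by simp))
  have hpos : (0 : ℝ) < 2 * (C.card : ℝ) := by linarith
  have h := hloss C hC
  set m := max 0 (v C - ε - ∑ i ∈ C, p i) with hm
  have hm0 : 0 ≤ m := le_max_left _ _
  have h1 : m ^ 2 ≤ 2 * (n : ℝ) * γ ^ 2 := by
    have h2 : m ^ 2 ≤ 2 * (C.card : ℝ) * γ ^ 2 := by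
      rw [div_mul_eq_mul_div, one_mul, div_le_iff₀ hpos] at h
      linarith
    have : 2 * (C.card : ℝ) * γ ^ 2 ≤ 2 * (n : ℝ) * γ ^ 2 := by
      have := sq_nonneg γ
      nlinarith
    linarith
  have hsq : m ≤ Real.sqrt (2 * n) * γ := by
    have : m ^ 2 ≤ (Real.sqrt (2 * n) * γ) ^ 2 := by
      rw [mul_pow, Real.sq_sqrt (by positivity)]
      linarith
    have hrhs : 0 ≤ Real.sqrt (2 * n) * γ := by positivity
    nlinarith
  have : v C - ε - ∑ i ∈ C, p i ≤ m := le_max_right _ _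
  linarith
end

section
/- Let F : X → R^{n+2} be defined on X = Δ × [ε̲, ε̄] × [0, μ̄] by F(p, ε, μ) = (−μ Σ_C (d_C/|C|)·c_C, 1 − μ Σ_C (d_C/|C|), −(Σ_C ℓ_C(p, ε) − γ²)), where d_C = max(0, v(C) − ε − pᵀc_C) and ℓ_C = d_C²/(2|C|), summing over all nonempty coalitions C ⊆ I. Then F is monotone: ⟨F(x) − F(x'), x − x'⟩ ≥ 0 for all x, x' ∈ X. -/
open Finset

/-- The deficit of coalition `C` under payoffs `p` and slack `ε`. -/
noncomputable def CLdeficit (n : ℕ) (v : Finset (Fin n) → ℝ)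
    (C : Finset (Fin n)) (p : Fin n → ℝ) (ε : ℝ) : ℝ :=
  max 0 (v C - ε - ∑ i ∈ C, p i)

/-- The variational-inequality map `F` of the core Lagrangian, with components
`(−μ Σ_C (d_C/|C|) c_C, 1 − μ Σ_C (d_C/|C|), −(Σ_C ℓ_C − γ²))`, summing over
all nonempty coalitions `C ⊆ I`. -/
noncomputable def CLmap (n : ℕ) (v : Finset (Fin n) → ℝ) (γ : ℝ)
    (x : (Fin n → ℝ) × ℝ × ℝ) : (Fin n → ℝ) × ℝ × ℝ :=
  let p := x.1; let ε := x.2.1; let μ := x.2.2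
  ⟨fun i => -μ * ∑ C ∈ Finset.univ.powerset.filter (fun C => C.Nonempty),
      (CLdeficit n v C p ε / C.card) * (if i ∈ C then (1 : ℝ) else 0),
   1 - μ * ∑ C ∈ Finset.univ.powerset.filter (fun C => C.Nonempty),
      CLdeficit n v C p ε / C.card,
   -((∑ C ∈ Finset.univ.powerset.filter (fun C => C.Nonempty),
      (CLdeficit n v C p ε) ^ 2 / (2 * C.card)) - γ ^ 2)⟩

/-- Convexity of `t ↦ max(0,t)²/2`: gradient inequality. -/
lemma CL_key_ineq (t t' : ℝ) :
    (max 0 t) ^ 2 / 2 - (max 0 t') ^ 2 / 2 ≤ max 0 t * (t - t') := by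
  rcases le_total t 0 with h | h <;> rcases le_total t' 0 with h' | h'
  · rw [max_eq_left h, max_eq_left h']; nlinarith
  · rw [max_eq_left h, max_eq_right h']; nlinarith
  · rw [max_eq_right h, max_eq_left h']; nlinarith
  · rw [max_eq_right h, max_eq_right h']; nlinarith [sq_nonneg (t - t')]

/-- The map `F` of the core Lagrangian is monotone on
`X = Δ × [ε̲, ε̄] × [0, μ̄]`:  `⟨F(x) − F(x'), x − x'⟩ ≥ 0`. -/
theorem CLmap_monotone (n : ℕ) (v : Finset (Fin n) → ℝ)
    (γ εlo εhi μbar : ℝ) (hγ : 0 < γ) (hε : εlo ≤ εhi) (hμ : 0 ≤ μbar) :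
    ∀ x x' : (Fin n → ℝ) × ℝ × ℝ,
      ((∀ i, 0 ≤ x.1 i) ∧ (∑ i, x.1 i) = 1 ∧ x.2.1 ∈ Set.Icc εlo εhi ∧
        x.2.2 ∈ Set.Icc 0 μbar) →
      ((∀ i, 0 ≤ x'.1 i) ∧ (∑ i, x'.1 i) = 1 ∧ x'.2.1 ∈ Set.Icc εlo εhi ∧
        x'.2.2 ∈ Set.Icc 0 μbar) →
      0 ≤ (∑ i, ((CLmap n v γ x).1 i - (CLmap n v γ x').1 i) * (x.1 i - x'.1 i))
          + ((CLmap n v γ x).2.1 - (CLmap n v γ x').2.1) * (x.2.1 - x'.2.1)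
          + ((CLmap n v γ x).2.2 - (CLmap n v γ x').2.2) * (x.2.2 - x'.2.2) := by
  rintro ⟨p, ε, μ⟩ ⟨p', ε', μ'⟩ ⟨-, -, -, hμx⟩ ⟨-, -, -, hμx'⟩
  obtain ⟨hμ0, -⟩ := hμx
  obtain ⟨hμ0', -⟩ := hμx'
  set T := Finset.univ.powerset.filter (fun C : Finset (Fin n) => C.Nonempty) with hT
  set d : Finset (Fin n) → ℝ := fun C => CLdeficit n v C p ε with hd
  set d' : Finset (Fin n) → ℝ := fun C => CLdeficit n v C p' ε' with hd'
  set s : Finset (Fin n) → ℝ := fun C => ∑ i ∈ C, (p i - p' i) with hs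
  -- swap lemma: weighted indicator sums over players = sums over coalitions
  have swap : ∀ (f : Finset (Fin n) → ℝ) (g : Fin n → ℝ),
      (∑ i, (∑ C ∈ T, f C * (if i ∈ C then (1 : ℝ) else 0)) * g i)
        = ∑ C ∈ T, f C * ∑ i ∈ C, g i := by
    intro f g
    simp only [Finset.sum_mul, mul_assoc]
    rw [Finset.sum_comm]
    refine Finset.sum_congr rfl fun C _ => ?_
    rw [← Finset.mul_sum]
    congr 1
    simp [ite_mul]
  -- the p-component of the inner product
  have h1 : (∑ i, ((CLmap n v γ (p, ε, μ)).1 i - (CLmap n v γ (p', ε', μ')).1 i)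
        * (p i - p' i))
      = ∑ C ∈ T, (μ' * d' C - μ * d C) / C.card * s C := by
    have e1 : ∀ i, ((CLmap n v γ (p, ε, μ)).1 i - (CLmap n v γ (p', ε', μ')).1 i)
        * (p i - p' i)
        = (∑ C ∈ T, ((μ' * d' C - μ * d C) / C.card) * (if i ∈ C then (1 : ℝ) else 0))
          * (p i - p' i) := by
      intro i
      simp only [CLmap, hd, hd']
      congr 1
      rw [Finset.mul_sum, Finset.mul_sum, ← Finset.sum_sub_distrib]
      refine Finset.sum_congr rfl fun C _ => ?_
      ring
    rw [Finset.sum_congr rfl fun i _ => e1 i, swap]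
  -- the ε-component
  have h2 : ((CLmap n v γ (p, ε, μ)).2.1 - (CLmap n v γ (p', ε', μ')).2.1) * (ε - ε')
      = ∑ C ∈ T, (μ' * d' C - μ * d C) / C.card * (ε - ε') := by
    simp only [CLmap, hd, hd']
    rw [← hT]
    have hsub : ∑ C ∈ T, (μ' * CLdeficit n v C p' ε' - μ * CLdeficit n v C p ε) / (C.card : ℝ)
        = (∑ C ∈ T, μ' * (CLdeficit n v C p' ε' / C.card))
          - ∑ C ∈ T, μ * (CLdeficit n v C p ε / C.card) := by
      rw [← Finset.sum_sub_distrib]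
      exact Finset.sum_congr rfl fun C _ => by ring
    have hmain : (1 - μ * ∑ C ∈ T, CLdeficit n v C p ε / C.card)
        - (1 - μ' * ∑ C ∈ T, CLdeficit n v C p' ε' / C.card)
        = ∑ C ∈ T, (μ' * CLdeficit n v C p' ε' - μ * CLdeficit n v C p ε) / (C.card : ℝ) := by
      rw [hsub, Finset.mul_sum, Finset.mul_sum]; ring
    rw [hmain, Finset.sum_mul]
  -- the μ-component
  have h3 : ((CLmap n v γ (p, ε, μ)).2.2 - (CLmap n v γ (p', ε', μ')).2.2) * (μ - μ')
      = ∑ C ∈ T, (-((d C ^ 2 - d' C ^ 2) / (2 * C.card))) * (μ - μ') := by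
    simp only [CLmap, hd, hd']
    rw [← hT]
    have hsub : ∑ C ∈ T, (-((CLdeficit n v C p ε ^ 2 - CLdeficit n v C p' ε' ^ 2)
            / (2 * (C.card : ℝ))))
        = (∑ C ∈ T, CLdeficit n v C p' ε' ^ 2 / (2 * C.card))
          - ∑ C ∈ T, CLdeficit n v C p ε ^ 2 / (2 * C.card) := by
      rw [← Finset.sum_sub_distrib]
      exact Finset.sum_congr rfl fun C _ => by ring
    have hmain : -((∑ C ∈ T, CLdeficit n v C p ε ^ 2 / (2 * C.card)) - γ ^ 2)
        - -((∑ C ∈ T, CLdeficit n v C p' ε' ^ 2 / (2 * C.card)) - γ ^ 2)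
        = ∑ C ∈ T, (-((CLdeficit n v C p ε ^ 2 - CLdeficit n v C p' ε' ^ 2)
            / (2 * (C.card : ℝ)))) := by
      rw [hsub]; ring
    rw [hmain, Finset.sum_mul]
  rw [h1, h2, h3, ← Finset.sum_add_distrib, ← Finset.sum_add_distrib]
  refine Finset.sum_nonneg fun C hC => ?_
  have hCne : C.Nonempty := (Finset.mem_filter.mp hC).2
  have hc0 : (0 : ℝ) < C.card := by exact_mod_cast Finset.card_pos.mpr hCne
  set t : ℝ := v C - ε - ∑ i ∈ C, p i with ht
  set t' : ℝ := v C - ε' - ∑ i ∈ C, p' i with ht'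
  have hdC : d C = max 0 t := rfl
  have hdC' : d' C = max 0 t' := rfl
  have hsC : s C = (∑ i ∈ C, p i) - ∑ i ∈ C, p' i := by
    simp [hs, Finset.sum_sub_distrib]
  have k1 := CL_key_ineq t t'
  have k2 := CL_key_ineq t' t
  have hrw : (μ' * d' C - μ * d C) / C.card * s C
      + (μ' * d' C - μ * d C) / C.card * (ε - ε')
      + (-((d C ^ 2 - d' C ^ 2) / (2 * C.card))) * (μ - μ')
      = (μ * (max 0 t * (t - t') - ((max 0 t) ^ 2 / 2 - (max 0 t') ^ 2 / 2))
        + μ' * (max 0 t' * (t' - t) - ((max 0 t') ^ 2 / 2 - (max 0 t) ^ 2 / 2)))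
        / C.card := by
    rw [hdC, hdC', hsC]
    have hts : t - t' = (ε' - ε) + ((∑ i ∈ C, p' i) - ∑ i ∈ C, p i) := by
      rw [ht, ht']; ring
    rw [hts]; ring
  rw [hrw]
  apply div_nonneg _ hc0.le
  have b1 : 0 ≤ max 0 t * (t - t') - ((max 0 t) ^ 2 / 2 - (max 0 t') ^ 2 / 2) := by
    linarith
  have b2 : 0 ≤ max 0 t' * (t' - t) - ((max 0 t') ^ 2 / 2 - (max 0 t) ^ 2 / 2) := by
    linarith
  exact add_nonneg (mul_nonneg hμ0 b1) (mul_nonneg hμ0' b2)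
end

section
/- In an induced subgraph game on graph G = (V, E) with all edge weights nonnegative, the core is nonempty; in particular the payoff p_i = (1/2)·Σ_{e=(i,j)∈E} w(e) (each player receives half of the weight of each incident edge) is in the core. -/
/-- In an induced subgraph game with nonnegative (symmetric, loopless) edge
weights `w`, the payoff giving each player half the weight of each incident
edge is in the core; in particular the core is nonempty. Here
`v(C) = (1/2) Σ_{i∈C} Σ_{j∈C} w i j` counts each edge of `C` once. -/
theorem induced_subgraph_game_core_nonempty (n : ℕ) (w : Fin n → Fin n → ℝ)
    (hsymm : ∀ i j, w i j = w j i) (hnonneg : ∀ i j, 0 ≤ w i j)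
    (hloop : ∀ i, w i i = 0) :
    let v : Finset (Fin n) → ℝ := fun C => (1 / 2) * ∑ i ∈ C, ∑ j ∈ C, w i j
    let p : Fin n → ℝ := fun i => (1 / 2) * ∑ j, w i j
    (∀ i, 0 ≤ p i) ∧ (∑ i, p i) = v Finset.univ ∧
      ∀ C : Finset (Fin n), v C ≤ ∑ i ∈ C, p i := by
  intro v p
  refine ⟨fun i => mul_nonneg (by norm_num) (Finset.sum_nonneg fun j _ => hnonneg i j), ?_, fun C => ?_⟩
  · simp [p, v, Finset.mul_sum]
  · rw [show (∑ i ∈ C, p i) = (1/2) * ∑ i ∈ C, ∑ j, w i j by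
      simp [p, Finset.mul_sum]]
    apply mul_le_mul_of_nonneg_left _ (by norm_num)
    exact Finset.sum_le_sum fun i _ =>
      Finset.sum_le_sum_of_subset_of_nonneg (Finset.subset_univ C)
        (fun j _ _ => hnonneg i j)
end
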